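/- A signed graph G has a unique Laplacian inertia (the same inertia triple for every consistent weighting) if and only if its flexibility τ = n + c − c₊ − c₋ equals 0, and in that case the unique Laplacian inertia is (c₊ − c, c₋ − c, c). -/

import Mathlib

/-! The quadratic form of `L` is `x ↦ -½ ∑ᵢⱼ wᵢⱼ (xᵢ - xⱼ)²`. On vectors constant on the
components of `G₋` it is `≤ 0` and vanishes exactly on vectors constant on the components of
`G`; a complement of the latter inside the former is a negative definite subspace, so
`n₋ ≥ c₋ - c`. Negating all weights swaps the signs, giving `n₊ ≥ c₊ - c`, and `n₀ ≥ c`. These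
lower bounds add up to `n - τ`, so for `τ = 0` they are attained by every weighting.
Conversely, weight the positive edges by `1` and the negative ones by a small `ε > 0`: the
negative definite complement of the kernel of the positive part stays negative definite, so
`n₋ ≥ n - c₊`; symmetrically some weighting has `n₊ ≥ n - c₋`. Equal inertias of these two
weightings force `τ ≤ 0`, while `τ ≥ 0` is the dimension formula for the spaces of vectors
constant on the components of `G₊` and of `G₋`. -/

open scoped Classical
open Polynomial

namespace SGPaper

/-- A weighted signed graph on `n` vertices, given by its symmetric hollow
matrix of edge weights (a nonzero entry `w i j` is the weight of the edge `ij`;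
positive edges have positive weight, negative edges negative weight). -/
structure WSG (n : ℕ) where
  w : Matrix (Fin n) (Fin n) ℝ
  symm : w.IsSymm
  loopless : ∀ i, w i i = 0

variable {n : ℕ}

/-- The underlying simple graph. -/
def WSG.graph (Γ : WSG n) : SimpleGraph (Fin n) :=
  SimpleGraph.fromRel (fun i j => Γ.w i j ≠ 0)

/-- The spanning subgraph of positive edges. -/
def WSG.posGraph (Γ : WSG n) : SimpleGraph (Fin n) :=
  SimpleGraph.fromRel (fun i j => 0 < Γ.w i j)

/-- The spanning subgraph of negative edges. -/
def WSG.negGraph (Γ : WSG n) : SimpleGraph (Fin n) :=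
  SimpleGraph.fromRel (fun i j => Γ.w i j < 0)

/-- Number of connected components of a graph. -/
noncomputable def comps {V : Type*} (G : SimpleGraph V) : ℕ :=
  Nat.card G.ConnectedComponent

/-- Weighted Laplacian `L = A - D`. -/
def WSG.lap (Γ : WSG n) : Matrix (Fin n) (Fin n) ℝ :=
  Γ.w - Matrix.diagonal (fun i => ∑ j, Γ.w i j)

theorem WSG.lap_isHermitian (Γ : WSG n) : Γ.lap.IsHermitian := by
  have h : Γ.lap.IsSymm := Γ.symm.sub (Matrix.isSymm_diagonal _)
  show Γ.lap.conjTranspose = Γ.lap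
  rw [Matrix.conjTranspose_eq_transpose_of_trivial]
  exact h

/-- Number of positive eigenvalues of the Laplacian. -/
noncomputable def WSG.nPos (Γ : WSG n) : ℕ :=
  (Finset.univ.filter fun i => 0 < Γ.lap_isHermitian.eigenvalues i).card

/-- Number of negative eigenvalues of the Laplacian. -/
noncomputable def WSG.nNeg (Γ : WSG n) : ℕ :=
  (Finset.univ.filter fun i => Γ.lap_isHermitian.eigenvalues i < 0).card

/-- Multiplicity of `0` as an eigenvalue of the Laplacian. -/
noncomputable def WSG.nZero (Γ : WSG n) : ℕ :=
  (Finset.univ.filter fun i => Γ.lap_isHermitian.eigenvalues i = 0).card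

/-- The Laplacian inertia `(n₊, n₋, n₀)`. -/
noncomputable def WSG.inertia (Γ : WSG n) : ℕ × ℕ × ℕ := (Γ.nPos, Γ.nNeg, Γ.nZero)

/-- A signed graph: a pair of edge-disjoint simple graphs of positive and
negative edges on the vertex set `Fin n`. -/
structure SignedGraph (n : ℕ) where
  pos : SimpleGraph (Fin n)
  neg : SimpleGraph (Fin n)
  disj : ∀ i j, ¬(pos.Adj i j ∧ neg.Adj i j)

/-- The underlying (unsigned) simple graph. -/
def SignedGraph.graph {n : ℕ} (G : SignedGraph n) : SimpleGraph (Fin n) := G.pos ⊔ G.neg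

/-- `Γ` is a consistent weighting of the signed graph `G`: the positive edges of
`Γ` are exactly the positive edges of `G` and likewise for negative edges. -/
def Consistent {n : ℕ} (G : SignedGraph n) (Γ : WSG n) : Prop :=
  Γ.posGraph = G.pos ∧ Γ.negGraph = G.neg

/-- `G` has the unique Laplacian inertia `T`: every consistent weighting of `G`
has Laplacian inertia `T`. -/
def HasUniqueInertia {n : ℕ} (G : SignedGraph n) (T : ℕ × ℕ × ℕ) : Prop :=
  ∀ Γ : WSG n, Consistent G Γ → Γ.inertia = T

end SGPaper

open Matrix Module Finset

section LinearAlgebra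

variable {ι : Type*} [Fintype ι]

theorem Submodule.finrank_le_card_of_forall_apply_eq_zero {E : Type*} [AddCommGroup E]
    [Module ℝ E] [FiniteDimensional ℝ E] (W : Submodule ℝ E) (f : E →ₗ[ℝ] ι → ℝ)
    (s : Finset ι) (h : ∀ x ∈ W, (∀ i ∈ s, f x i = 0) → x = 0) : finrank ℝ W ≤ s.card := by
  let g : W →ₗ[ℝ] s → ℝ := LinearMap.funLeft ℝ ℝ (Subtype.val : s → ι) ∘ₗ f ∘ₗ W.subtype
  have hg : Function.Injective g := by
    rw [← LinearMap.ker_eq_bot, LinearMap.ker_eq_bot']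
    intro x hx
    exact Subtype.ext <| h x x.2 fun i hi => congrFun hx ⟨i, hi⟩
  simpa using LinearMap.finrank_le_finrank_of_injective hg

theorem exists_finrank_add_eq_forall_neg {K E : Type*} [DivisionRing K] [AddCommGroup E]
    [Module K E] [FiniteDimensional K E] (q : E → ℝ) {I U : Submodule K E} (hIU : I ≤ U)
    (hq : ∀ x ∈ U, q x ≤ 0) (hq₀ : ∀ x ∈ U, q x = 0 → x ∈ I) :
    ∃ W : Submodule K E, finrank K W + finrank K I = finrank K U ∧
      ∀ x ∈ W, x ≠ 0 → q x < 0 := by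
  obtain ⟨C, hC⟩ := I.exists_isCompl
  refine ⟨U ⊓ C, ?_, fun x hx hx0 => (hq x hx.1).lt_of_ne fun h0 => hx0 ?_⟩
  · have hsup : U ⊓ C ⊔ I = U := by
      rw [sup_comm, inf_comm, ← sup_inf_assoc_of_le C hIU, hC.sup_eq_top, top_inf_eq]
    have hinf : U ⊓ C ⊓ I = ⊥ :=
      eq_bot_iff.mpr fun x hx => (Submodule.disjoint_def.mp hC.disjoint) x hx.2 hx.1.2
    have := Submodule.finrank_sup_add_finrank_inf_eq (U ⊓ C) I
    rw [hsup, hinf, finrank_bot] at this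
    omega
  · exact (Submodule.disjoint_def.mp hC.disjoint) x (hq₀ x hx.1 h0) hx.2

theorem exists_pos_forall_dotProduct_add_smul_mulVec_neg (A B : Matrix ι ι ℝ)
    (W : Submodule ℝ (ι → ℝ)) (hA : ∀ x ∈ W, x ≠ 0 → x ⬝ᵥ A *ᵥ x < 0) :
    ∃ ε : ℝ, 0 < ε ∧ ∀ x ∈ W, x ≠ 0 → x ⬝ᵥ (A + ε • B) *ᵥ x < 0 := by
  set F : ℝ → (ι → ℝ) → ℝ := fun ε x => x ⬝ᵥ (A + ε • B) *ᵥ x with hF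
  have hFc : Continuous fun p : ℝ × (ι → ℝ) => F p.1 p.2 := by
    simp only [hF]; fun_prop
  have hF_smul (ε t : ℝ) (x : ι → ℝ) : F ε (t • x) = t ^ 2 * F ε x := by
    simp only [hF, mulVec_smul, smul_dotProduct, dotProduct_smul, smul_eq_mul]; ring
  -- `F ε` is homogeneous of degree 2, so only the compact unit sphere of `W` matters.
  set S := (W : Set (ι → ℝ)) ∩ Metric.sphere 0 1
  have hS : IsCompact S := (isCompact_sphere 0 1).inter_left W.closed_of_finiteDimensional
  have hnear : ∀ᶠ ε in nhds 0, ∀ y ∈ S, F ε y < 0 :=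
    hS.eventually_forall_of_forall_eventually fun y hy =>
      (hFc.tendsto (0, y)).eventually_lt_const
        (by simpa [hF] using hA y hy.1 (ne_zero_of_mem_unit_sphere ⟨y, hy.2⟩))
  obtain ⟨ε, hεS, hε⟩ := ((hnear.filter_mono nhdsWithin_le_nhds).and
    (self_mem_nhdsWithin : Set.Ioi (0:ℝ) ∈ nhdsWithin 0 (Set.Ioi 0))).exists
  refine ⟨ε, hε, fun x hx hx0 => ?_⟩
  have hnx : 0 < ‖x‖ := norm_pos_iff.mpr hx0
  have hy : ‖x‖⁻¹ • x ∈ S := ⟨W.smul_mem _ hx, by simp [norm_smul, hnx.ne']⟩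
  have hx' : x = ‖x‖ • ‖x‖⁻¹ • x := by rw [smul_smul, mul_inv_cancel₀ hnx.ne', one_smul]
  show F ε x < 0
  rw [hx', hF_smul]
  exact mul_neg_of_pos_of_neg (by positivity) (hεS _ hy)

end LinearAlgebra

namespace Matrix.IsHermitian

variable {ι : Type*} [Fintype ι] [DecidableEq ι] {A : Matrix ι ι ℝ}

theorem star_eigenvectorUnitary_mul_mul_eigenvectorUnitary (hA : A.IsHermitian) :
    star (hA.eigenvectorUnitary : Matrix ι ι ℝ) * A * hA.eigenvectorUnitary =
      diagonal hA.eigenvalues := by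
  simpa using hA.conjStarAlgAut_star_eigenvectorUnitary

theorem dotProduct_mulVec_self_eq_sum (hA : A.IsHermitian) (x : ι → ℝ) :
    x ⬝ᵥ A *ᵥ x =
      ∑ i, hA.eigenvalues i * (star (hA.eigenvectorUnitary : Matrix ι ι ℝ) *ᵥ x) i ^ 2 := by
  set U := (hA.eigenvectorUnitary : Matrix ι ι ℝ)
  set y := star U *ᵥ x
  have hx : x = U *ᵥ y := by simp [y, U, mulVec_mulVec]
  calc x ⬝ᵥ A *ᵥ x = y ⬝ᵥ (star U * A * U) *ᵥ y := by
        conv_lhs => rw [hx]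
        rw [dotProduct_mulVec, vecMul_mulVec, ← dotProduct_mulVec, ← mulVec_mulVec,
          ← mulVec_mulVec]
        simp [star_eq_conjTranspose, conjTranspose_eq_transpose_of_trivial, dotProduct_mulVec,
          mulVec_mulVec, Matrix.mul_assoc]
    _ = _ := by
        rw [hA.star_eigenvectorUnitary_mul_mul_eigenvectorUnitary]
        simp [dotProduct, mulVec_diagonal, sq, mul_left_comm]

theorem star_eigenvectorUnitary_mulVec_mulVec (hA : A.IsHermitian) (x : ι → ℝ) (i : ι) :
    (star (hA.eigenvectorUnitary : Matrix ι ι ℝ) *ᵥ A *ᵥ x) i =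
      hA.eigenvalues i * (star (hA.eigenvectorUnitary : Matrix ι ι ℝ) *ᵥ x) i := by
  have h : star (hA.eigenvectorUnitary : Matrix ι ι ℝ) * A =
      diagonal hA.eigenvalues * star (hA.eigenvectorUnitary : Matrix ι ι ℝ) := by
    rw [← hA.star_eigenvectorUnitary_mul_mul_eigenvectorUnitary, Matrix.mul_assoc _ _ (star _)]
    simp
  rw [mulVec_mulVec, h, ← mulVec_mulVec, mulVec_diagonal]

theorem finrank_le_card_pos_eigenvalues (hA : A.IsHermitian) (W : Submodule ℝ (ι → ℝ))
    (hW : ∀ x ∈ W, x ≠ 0 → 0 < x ⬝ᵥ A *ᵥ x) : finrank ℝ W ≤ #{i | 0 < hA.eigenvalues i} := by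
  refine W.finrank_le_card_of_forall_apply_eq_zero
    (star (hA.eigenvectorUnitary : Matrix ι ι ℝ)).mulVecLin _ fun x hx hy => ?_
  by_contra hx0
  have hpos := hW x hx hx0
  rw [hA.dotProduct_mulVec_self_eq_sum] at hpos
  refine hpos.not_ge (sum_nonpos fun i _ => ?_)
  by_cases hi : 0 < hA.eigenvalues i
  · simp [show (_ *ᵥ x) i = 0 from hy i (by simpa using hi)]
  · exact mul_nonpos_of_nonpos_of_nonneg (not_lt.mp hi) (sq_nonneg _)

theorem finrank_le_card_neg_eigenvalues (hA : A.IsHermitian) (W : Submodule ℝ (ι → ℝ))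
    (hW : ∀ x ∈ W, x ≠ 0 → x ⬝ᵥ A *ᵥ x < 0) : finrank ℝ W ≤ #{i | hA.eigenvalues i < 0} := by
  refine W.finrank_le_card_of_forall_apply_eq_zero
    (star (hA.eigenvectorUnitary : Matrix ι ι ℝ)).mulVecLin _ fun x hx hy => ?_
  by_contra hx0
  have hneg := hW x hx hx0
  rw [hA.dotProduct_mulVec_self_eq_sum] at hneg
  refine hneg.not_ge (sum_nonneg fun i _ => ?_)
  by_cases hi : hA.eigenvalues i < 0
  · simp [show (_ *ᵥ x) i = 0 from hy i (by simpa using hi)]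
  · exact mul_nonneg (not_lt.mp hi) (sq_nonneg _)

theorem finrank_le_card_zero_eigenvalues (hA : A.IsHermitian) (W : Submodule ℝ (ι → ℝ))
    (hW : ∀ x ∈ W, A *ᵥ x = 0) : finrank ℝ W ≤ #{i | hA.eigenvalues i = 0} := by
  refine W.finrank_le_card_of_forall_apply_eq_zero
    (star (hA.eigenvectorUnitary : Matrix ι ι ℝ)).mulVecLin _ fun x hx hy => ?_
  have hcoord : star (hA.eigenvectorUnitary : Matrix ι ι ℝ) *ᵥ x = 0 := by
    ext i
    by_cases hi : hA.eigenvalues i = 0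
    · exact hy i (by simpa using hi)
    · have := hA.star_eigenvectorUnitary_mulVec_mulVec x i
      rw [hW x hx, mulVec_zero, Pi.zero_apply, eq_comm, mul_eq_zero] at this
      exact this.resolve_left hi
  simpa [mulVec_mulVec] using congrArg ((hA.eigenvectorUnitary : Matrix ι ι ℝ) *ᵥ ·) hcoord

end Matrix.IsHermitian

theorem Finset.card_pos_add_card_neg_add_card_zero {ι : Type*} [Fintype ι] (f : ι → ℝ) :
    #{i | 0 < f i} + #{i | f i < 0} + #{i | f i = 0} = Fintype.card ι := by
  simp only [Finset.card_filter, ← Finset.sum_add_distrib]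
  rw [Finset.card_univ.symm, Finset.card_eq_sum_ones]
  refine Finset.sum_congr rfl fun i _ => ?_
  rcases lt_trichotomy (f i) 0 with h | h | h
  · simp [h, h.not_gt, h.ne]
  · simp [h]
  · simp [h, h.not_gt, h.ne']

namespace SimpleGraph

variable {V : Type*}

def componentwiseConst (H : SimpleGraph V) : Submodule ℝ (V → ℝ) where
  carrier := {x | ∀ i j, H.Adj i j → x i = x j}
  add_mem' hx hy i j hij := by simp [hx i j hij, hy i j hij]
  zero_mem' _ _ _ := rfl
  smul_mem' c x hx i j hij := by simp [hx i j hij]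

theorem mem_componentwiseConst {H : SimpleGraph V} {x : V → ℝ} :
    x ∈ H.componentwiseConst ↔ ∀ i j, H.Adj i j → x i = x j := Iff.rfl

theorem finrank_componentwiseConst [Fintype V] (H : SimpleGraph V) :
    finrank ℝ H.componentwiseConst = Nat.card H.ConnectedComponent := by
  classical
  have h : H.componentwiseConst = LinearMap.ker (H.lapMatrix ℝ).toLin' := by
    ext x
    rw [LinearMap.mem_ker, toLin'_apply, lapMatrix_mulVec_eq_zero_iff_forall_adj]
    rfl
  rw [h, ← card_connectedComponent_eq_finrank_ker_toLin'_lapMatrix, Nat.card_eq_fintype_card]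

theorem componentwiseConst_sup (H₁ H₂ : SimpleGraph V) :
    (H₁ ⊔ H₂).componentwiseConst = H₁.componentwiseConst ⊓ H₂.componentwiseConst := by
  ext x
  simp only [Submodule.mem_inf, mem_componentwiseConst, sup_adj]
  exact ⟨fun h => ⟨fun i j hij => h i j (.inl hij), fun i j hij => h i j (.inr hij)⟩,
    fun h i j => Or.rec (h.1 i j) (h.2 i j)⟩

theorem card_connectedComponent_add_card_le [Fintype V] (H₁ H₂ : SimpleGraph V) :
    Nat.card H₁.ConnectedComponent + Nat.card H₂.ConnectedComponent ≤
      Fintype.card V + Nat.card (H₁ ⊔ H₂).ConnectedComponent := by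
  have h := Submodule.finrank_sup_add_finrank_inf_eq H₁.componentwiseConst H₂.componentwiseConst
  have hle := (H₁.componentwiseConst ⊔ H₂.componentwiseConst).finrank_le
  rw [← componentwiseConst_sup] at h
  simp only [finrank_componentwiseConst, finrank_fintype_fun_eq_card] at h hle
  omega

end SimpleGraph

theorem mul_sub_sq_nonneg_of_imp {w a b : ℝ} (h : w < 0 → a = b) : 0 ≤ w * (a - b) ^ 2 := by
  rcases lt_or_ge w 0 with hw | hw
  · simp [h hw]
  · positivity

namespace SGPaper

variable {n : ℕ}

namespace WSG

variable (Γ : WSG n)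

theorem lap_mulVec_apply (x : Fin n → ℝ) (i : Fin n) :
    (Γ.lap *ᵥ x) i = ∑ j, Γ.w i j * (x j - x i) := by
  rw [lap, sub_mulVec, Pi.sub_apply, mulVec_diagonal, Finset.sum_mul, mulVec, dotProduct,
    ← Finset.sum_sub_distrib]
  exact Finset.sum_congr rfl fun j _ => by ring

theorem two_mul_dotProduct_lap_mulVec (x : Fin n → ℝ) :
    2 * (x ⬝ᵥ Γ.lap *ᵥ x) = -∑ i, ∑ j, Γ.w i j * (x i - x j) ^ 2 := by
  have hswap : ∑ i, ∑ j, x i * (Γ.w i j * (x j - x i)) =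
      ∑ i, ∑ j, x j * (Γ.w i j * (x i - x j)) := by
    rw [Finset.sum_comm]
    simp only [Γ.symm.apply]
  calc 2 * (x ⬝ᵥ Γ.lap *ᵥ x)
      = ∑ i, ∑ j, x i * (Γ.w i j * (x j - x i)) + ∑ i, ∑ j, x j * (Γ.w i j * (x i - x j)) := by
        rw [← hswap, two_mul]
        simp only [dotProduct, lap_mulVec_apply, Finset.mul_sum]
    _ = -∑ i, ∑ j, Γ.w i j * (x i - x j) ^ 2 := by
        simp only [← Finset.sum_add_distrib, ← Finset.sum_neg_distrib]
        exact Finset.sum_congr rfl fun i _ => Finset.sum_congr rfl fun j _ => by ring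

theorem dotProduct_lap_mulVec_nonpos {x : Fin n → ℝ} (hx : ∀ i j, Γ.w i j < 0 → x i = x j) :
    x ⬝ᵥ Γ.lap *ᵥ x ≤ 0 := by
  have : 0 ≤ ∑ i, ∑ j, Γ.w i j * (x i - x j) ^ 2 :=
    Finset.sum_nonneg fun i _ => Finset.sum_nonneg fun j _ => mul_sub_sq_nonneg_of_imp (hx i j)
  linarith [Γ.two_mul_dotProduct_lap_mulVec x]

theorem eq_of_dotProduct_lap_mulVec_eq_zero {x : Fin n → ℝ}
    (hx : ∀ i j, Γ.w i j < 0 → x i = x j) (h₀ : x ⬝ᵥ Γ.lap *ᵥ x = 0) {i j : Fin n}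
    (hij : 0 < Γ.w i j) : x i = x j := by
  have hterm (i j : Fin n) : 0 ≤ Γ.w i j * (x i - x j) ^ 2 := mul_sub_sq_nonneg_of_imp (hx i j)
  have hsum : ∑ i, ∑ j, Γ.w i j * (x i - x j) ^ 2 = 0 := by
    linarith [Γ.two_mul_dotProduct_lap_mulVec x]
  rw [Finset.sum_eq_zero_iff_of_nonneg fun i _ => Finset.sum_nonneg fun j _ => hterm i j] at hsum
  have := (Finset.sum_eq_zero_iff_of_nonneg fun j _ => hterm i j).mp (hsum i (by simp)) j (by simp)
  simpa [hij.ne', sub_eq_zero] using this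

theorem lap_mulVec_eq_zero {x : Fin n → ℝ} (hx : ∀ i j, Γ.w i j ≠ 0 → x i = x j) :
    Γ.lap *ᵥ x = 0 := by
  ext i
  rw [lap_mulVec_apply, Pi.zero_apply]
  refine Finset.sum_eq_zero fun j _ => ?_
  by_cases h : Γ.w i j = 0
  · simp [h]
  · simp [hx i j h]

theorem posGraph_adj {i j : Fin n} : Γ.posGraph.Adj i j ↔ 0 < Γ.w i j := by
  rw [posGraph, SimpleGraph.fromRel_adj, Γ.symm.apply, or_self, and_iff_right_iff_imp]
  rintro h rfl
  simp [Γ.loopless] at h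

theorem negGraph_adj {i j : Fin n} : Γ.negGraph.Adj i j ↔ Γ.w i j < 0 := by
  rw [negGraph, SimpleGraph.fromRel_adj, Γ.symm.apply, or_self, and_iff_right_iff_imp]
  rintro h rfl
  simp [Γ.loopless] at h

instance : Neg (WSG n) where
  neg Γ := ⟨-Γ.w, Γ.symm.neg, fun i => by simp [Γ.loopless]⟩

@[simp]
theorem neg_w : (-Γ).w = -Γ.w := rfl

theorem lap_neg : (-Γ).lap = -Γ.lap := by
  ext i j
  simp only [lap, neg_w, Matrix.sub_apply, Matrix.neg_apply, diagonal_apply,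
    Finset.sum_neg_distrib]
  split_ifs <;> ring

theorem lap_eq_smul_add_smul {Γ₁ Γ₂ : WSG n} {a b : ℝ}
    (h : ∀ i j, Γ.w i j = a * Γ₁.w i j + b * Γ₂.w i j) : Γ.lap = a • Γ₁.lap + b • Γ₂.lap := by
  ext i j
  simp only [lap, h, Matrix.add_apply, Matrix.smul_apply, Matrix.sub_apply, diagonal_apply,
    smul_eq_mul, Finset.sum_add_distrib, ← Finset.mul_sum]
  split_ifs <;> ring

theorem nPos_add_nNeg_add_nZero : Γ.nPos + Γ.nNeg + Γ.nZero = n :=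
  (Finset.card_pos_add_card_neg_add_card_zero _).trans (Fintype.card_fin n)

end WSG

def SignedGraph.swap (G : SignedGraph n) : SignedGraph n :=
  ⟨G.neg, G.pos, fun i j h => G.disj i j h.symm⟩

theorem SignedGraph.swap_graph (G : SignedGraph n) : G.swap.graph = G.graph :=
  sup_comm _ _

theorem consistent_iff {G : SignedGraph n} {Γ : WSG n} :
    Consistent G Γ ↔ ∀ i j, (0 < Γ.w i j ↔ G.pos.Adj i j) ∧ (Γ.w i j < 0 ↔ G.neg.Adj i j) := by
  simp only [Consistent, SimpleGraph.ext_iff, funext_iff, eq_iff_iff, Γ.posGraph_adj,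
    Γ.negGraph_adj, forall_and]

theorem Consistent.neg {G : SignedGraph n} {Γ : WSG n} (hc : Consistent G Γ) :
    Consistent G.swap (-Γ) := by
  rw [consistent_iff] at hc ⊢
  intro i j
  simp [SignedGraph.swap, hc i j]

namespace SignedGraph

variable (G : SignedGraph n)

noncomputable def weighting (a b : ℝ) : WSG n where
  w := Matrix.of fun i j => if G.pos.Adj i j then a else if G.neg.Adj i j then -b else 0
  symm := by
    ext i j
    simp [G.pos.adj_comm, G.neg.adj_comm]
  loopless i := by simp

theorem lap_weighting (a b : ℝ) :
    (G.weighting a b).lap = a • (G.weighting 1 0).lap + b • (G.weighting 0 1).lap :=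
  WSG.lap_eq_smul_add_smul _ fun i j => by simp only [weighting, of_apply]; split_ifs <;> ring

theorem consistent_weighting {a b : ℝ} (ha : 0 < a) (hb : 0 < b) :
    Consistent G (G.weighting a b) := by
  rw [consistent_iff]
  intro i j
  by_cases hp : G.pos.Adj i j
  · have hn : ¬G.neg.Adj i j := fun hn => G.disj i j ⟨hp, hn⟩
    simp [weighting, hp, hn, ha, ha.not_gt]
  · by_cases hn : G.neg.Adj i j <;> simp [weighting, hp, hn, hb, hb.le]

end SignedGraph

open SimpleGraph

theorem Consistent.exists_finrank_add_comps_eq_forall_neg {G : SignedGraph n} {Γ : WSG n}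
    (hc : Consistent G Γ) : ∃ W : Submodule ℝ (Fin n → ℝ),
      finrank ℝ W + comps G.graph = comps G.neg ∧ ∀ x ∈ W, x ≠ 0 → x ⬝ᵥ Γ.lap *ᵥ x < 0 := by
  have hadj := consistent_iff.mp hc
  have hneg (x : Fin n → ℝ) (hx : x ∈ G.neg.componentwiseConst) :
      ∀ i j, Γ.w i j < 0 → x i = x j := fun i j h => hx i j ((hadj i j).2.mp h)
  obtain ⟨W, hW, hW_neg⟩ := exists_finrank_add_eq_forall_neg (fun x => x ⬝ᵥ Γ.lap *ᵥ x)
    (I := G.graph.componentwiseConst) (U := G.neg.componentwiseConst)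
    (by rw [SignedGraph.graph, componentwiseConst_sup]; exact inf_le_right)
    (fun x hx => Γ.dotProduct_lap_mulVec_nonpos (hneg x hx))
    (fun x hx h₀ => by
      rw [SignedGraph.graph, componentwiseConst_sup]
      exact ⟨fun i j hij => Γ.eq_of_dotProduct_lap_mulVec_eq_zero (hneg x hx) h₀
        ((hadj i j).1.mpr hij), hx⟩)
  exact ⟨W, by simpa only [finrank_componentwiseConst, comps] using hW, hW_neg⟩

theorem SignedGraph.exists_consistent_finrank_add_comps_eq_forall_neg (G : SignedGraph n) :
    ∃ Γ : WSG n, Consistent G Γ ∧ ∃ W : Submodule ℝ (Fin n → ℝ),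
      finrank ℝ W + comps G.pos = n ∧ ∀ x ∈ W, x ≠ 0 → x ⬝ᵥ Γ.lap *ᵥ x < 0 := by
  have hnonneg (i j : Fin n) : ¬(G.weighting 1 0).w i j < 0 := by
    simp only [weighting, of_apply]
    split_ifs <;> norm_num
  obtain ⟨W, hW, hW_neg⟩ := exists_finrank_add_eq_forall_neg
    (fun x => x ⬝ᵥ (G.weighting 1 0).lap *ᵥ x) (I := G.pos.componentwiseConst) (U := ⊤) le_top
    (fun x _ => WSG.dotProduct_lap_mulVec_nonpos _ fun i j h => (hnonneg i j h).elim)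
    (fun x _ h₀ i j hij => WSG.eq_of_dotProduct_lap_mulVec_eq_zero _
      (fun i j h => (hnonneg i j h).elim) h₀ (by simp [weighting, hij]))
  obtain ⟨ε, hε, hW_neg'⟩ :=
    exists_pos_forall_dotProduct_add_smul_mulVec_neg _ (G.weighting 0 1).lap W hW_neg
  refine ⟨G.weighting 1 ε, G.consistent_weighting one_pos hε, W, ?_, ?_⟩
  · simpa only [finrank_componentwiseConst, finrank_top, finrank_fin_fun, comps] using hW
  · simpa only [G.lap_weighting 1 ε, one_smul] using hW_neg'

theorem Consistent.comps_neg_le {G : SignedGraph n} {Γ : WSG n} (hc : Consistent G Γ) :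
    comps G.neg ≤ Γ.nNeg + comps G.graph := by
  obtain ⟨W, hW, hW_neg⟩ := hc.exists_finrank_add_comps_eq_forall_neg
  have : finrank ℝ W ≤ Γ.nNeg := Γ.lap_isHermitian.finrank_le_card_neg_eigenvalues W hW_neg
  omega

theorem Consistent.comps_pos_le {G : SignedGraph n} {Γ : WSG n} (hc : Consistent G Γ) :
    comps G.pos ≤ Γ.nPos + comps G.graph := by
  obtain ⟨W, hW, hW_neg⟩ := hc.neg.exists_finrank_add_comps_eq_forall_neg
  have : finrank ℝ W ≤ Γ.nPos := Γ.lap_isHermitian.finrank_le_card_pos_eigenvalues W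
    fun x hx hx0 => by simpa [WSG.lap_neg, neg_mulVec] using hW_neg x hx hx0
  rw [SignedGraph.swap_graph] at hW
  change finrank ℝ W + comps G.graph = comps G.pos at hW
  omega

theorem Consistent.comps_graph_le_nZero {G : SignedGraph n} {Γ : WSG n} (hc : Consistent G Γ) :
    comps G.graph ≤ Γ.nZero := by
  have hadj := consistent_iff.mp hc
  rw [comps, ← finrank_componentwiseConst]
  refine Γ.lap_isHermitian.finrank_le_card_zero_eigenvalues _ fun x hx =>
    Γ.lap_mulVec_eq_zero fun i j h => hx i j ?_
  rcases h.lt_or_gt with h | h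
  · exact .inr ((hadj i j).2.mp h)
  · exact .inl ((hadj i j).1.mp h)

theorem SignedGraph.exists_consistent_le_nNeg_add (G : SignedGraph n) :
    ∃ Γ : WSG n, Consistent G Γ ∧ n ≤ Γ.nNeg + comps G.pos := by
  obtain ⟨Γ, hc, W, hW, hW_neg⟩ := G.exists_consistent_finrank_add_comps_eq_forall_neg
  have : finrank ℝ W ≤ Γ.nNeg := Γ.lap_isHermitian.finrank_le_card_neg_eigenvalues W hW_neg
  exact ⟨Γ, hc, by omega⟩

theorem SignedGraph.exists_consistent_le_nPos_add (G : SignedGraph n) :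
    ∃ Γ : WSG n, Consistent G Γ ∧ n ≤ Γ.nPos + comps G.neg := by
  obtain ⟨Γ, hc, W, hW, hW_neg⟩ := G.swap.exists_consistent_finrank_add_comps_eq_forall_neg
  have : finrank ℝ W ≤ (-Γ).nPos := (-Γ).lap_isHermitian.finrank_le_card_pos_eigenvalues W
    fun x hx hx0 => by simpa [WSG.lap_neg, neg_mulVec] using hW_neg x hx hx0
  change finrank ℝ W + comps G.neg = n at hW
  exact ⟨-Γ, hc.neg, by omega⟩

theorem SignedGraph.comps_pos_add_comps_neg_le (G : SignedGraph n) :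
    comps G.pos + comps G.neg ≤ n + comps G.graph := by
  simpa only [comps, Fintype.card_fin, SignedGraph.graph] using
    card_connectedComponent_add_card_le G.pos G.neg

theorem SignedGraph.inertia_eq_of_flexibility_eq_zero {G : SignedGraph n}
    (h : n + comps G.graph = comps G.pos + comps G.neg) {Γ : WSG n} (hc : Consistent G Γ) :
    Γ.inertia = (comps G.pos - comps G.graph, comps G.neg - comps G.graph, comps G.graph) := by
  have := hc.comps_pos_le
  have := hc.comps_neg_le
  have := hc.comps_graph_le_nZero
  have := Γ.nPos_add_nNeg_add_nZero
  simp only [WSG.inertia, Prod.mk.injEq]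
  omega

theorem SignedGraph.flexibility_eq_zero_of_hasUniqueInertia {G : SignedGraph n}
    {T : ℕ × ℕ × ℕ} (hT : HasUniqueInertia G T) :
    n + comps G.graph = comps G.pos + comps G.neg := by
  obtain ⟨Γ₁, hc₁, h₁⟩ := G.exists_consistent_le_nNeg_add
  obtain ⟨Γ₂, hc₂, h₂⟩ := G.exists_consistent_le_nPos_add
  have h := (hT Γ₁ hc₁).trans (hT Γ₂ hc₂).symm
  simp only [WSG.inertia, Prod.mk.injEq] at h
  have := hc₁.comps_graph_le_nZero
  have := Γ₁.nPos_add_nNeg_add_nZero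
  have := G.comps_pos_add_comps_neg_le
  omega

/-- A signed graph has a unique Laplacian inertia iff its flexibility
`τ = n + c - c₊ - c₋` is zero, and then the unique inertia is
`(c₊ - c, c₋ - c, c)`. -/
theorem unique_inertia_iff_flexibility_zero {n : ℕ} (G : SignedGraph n) :
    ((∃ T, HasUniqueInertia G T) ↔
      n + comps G.graph = comps G.pos + comps G.neg) ∧
    (n + comps G.graph = comps G.pos + comps G.neg →
      HasUniqueInertia G (comps G.pos - comps G.graph, comps G.neg - comps G.graph,
        comps G.graph)) :=
  ⟨⟨fun ⟨_, hT⟩ => G.flexibility_eq_zero_of_hasUniqueInertia hT,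
    fun h => ⟨_, fun _ => G.inertia_eq_of_flexibility_eq_zero h⟩⟩,
    fun h _ => G.inertia_eq_of_flexibility_eq_zero h⟩

end SGPaper
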